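/- arXiv:2003.08722 — 2 statements merged into one kernel-verified Lean document; each statement's English description precedes it below -/
import Mathlib

section
/- (Perfect's lemma) Let λ_1 be a real number and λ_2, λ_3 complex numbers such that the multiset {λ_2, λ_3} is closed under complex conjugation (either both are real with λ_2 ≥ λ_3, or λ_3 is the complex conjugate of λ_2), and λ_1 ≥ |λ_i| for i = 2, 3. Let ω_1, ω_2, ω_3 be real numbers. Then there exists a 3×3 real matrix B with all entries nonnegative, whose rows each sum to λ_1, whose diagonal entries are ω_1, ω_2, ω_3, and whose characteristic polynomial (over ℂ) is (X − λ_1)(X − λ_2)(X − λ_3), if and only if: (i) 0 ≤ ω_k ≤ λ_1 for k = 1, 2, 3; (ii) ω_1 + ω_2 + ω_3 = λ_1 + λ_2 + λ_3; (iii) ω_1ω_2 + ω_1ω_3 + ω_2ω_3 ≥ Re(λ_1λ_2 + λ_1λ_3 + λ_2λ_3); and (iv) max{ω_1, ω_2, ω_3} ≥ Re(λ_2). -/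
/-!
Necessity. Each diagonal entry is at most its row sum. Comparing coefficients of the
characteristic polynomial gives (ii) and identifies `Re(λ₁λ₂ + λ₁λ₃ + λ₂λ₃)` with
`ω₁ω₂ + ω₁ω₃ + ω₂ω₃ - B₀₁B₁₀ - B₀₂B₂₀ - B₁₂B₂₁`, whence (iii). For (iv), let `m = max ωₖ`:
the matrix `m - B` has a zero on its diagonal and nonpositive entries off it, so its determinant,
`(m - λ₁)(m - λ₂)(m - λ₃)`, is `≤ 0`. If `m < Re λ₂`, the trace forces `λ₂, λ₃` to be real with
`λ₃ < m < λ₂ ≤ λ₁`, and that product is positive.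

Sufficiency. After permuting indices so that the largest `ω` is last, the matrix
`!![a, y, λ₁ - a - y; λ₁ - b, b, 0; 0, λ₁ - c, c]` has row sums `λ₁`, hence eigenvalue `λ₁`, and
the right trace; its characteristic polynomial is the right one once the free parameter `y` fixes
the middle coefficient. Then (iii) and `(c - λ₂)(c - λ₃) ≥ 0`, which holds by (iv), are exactly
the conditions `0 ≤ y ≤ λ₁ - a`.
-/

open Polynomial Matrix Finset

theorem Polynomial.X_sub_C_mul_quadratic {R : Type*} [CommRing R] (d T P : R) :
    (X - C d) * (X ^ 2 - C T * X + C P) =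
      X ^ 3 - C (d + T) * X ^ 2 + C (d * T + P) * X - C (d * P) := by
  simp only [map_add, map_mul]
  ring

namespace Matrix

variable {R : Type*} [CommRing R]

theorem charpoly_fin_three (M : Matrix (Fin 3) (Fin 3) R) :
    M.charpoly = X ^ 3 - C M.trace * X ^ 2
      + C (M 0 0 * M 1 1 - M 0 1 * M 1 0 + M 0 0 * M 2 2 - M 0 2 * M 2 0
        + M 1 1 * M 2 2 - M 1 2 * M 2 1) * X - C M.det := by
  simp only [charpoly, det_fin_three, trace_fin_three, charmatrix_apply, diagonal_apply,
    Fin.isValue, Fin.reduceEq, if_true, if_false, map_add, map_sub, map_mul]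
  ring

theorem charpoly_fin_three_eq_iff (M : Matrix (Fin 3) (Fin 3) R) (a b c : R) :
    M.charpoly = X ^ 3 - C a * X ^ 2 + C b * X - C c ↔
      M.trace = a ∧ M 0 0 * M 1 1 - M 0 1 * M 1 0 + M 0 0 * M 2 2 - M 0 2 * M 2 0
        + M 1 1 * M 2 2 - M 1 2 * M 2 1 = b ∧ M.det = c := by
  rw [charpoly_fin_three]
  refine ⟨fun h => ⟨?_, ?_, ?_⟩, fun ⟨ha, hb, hc⟩ => by rw [ha, hb, hc]⟩
  · simpa using congr_arg (coeff · 2) h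
  · simpa using congr_arg (coeff · 1) h
  · simpa using congr_arg (coeff · 0) h

theorem det_scalar_max_diag_sub_nonpos {B : Matrix (Fin 3) (Fin 3) ℝ} (hB : ∀ i j, 0 ≤ B i j) :
    (scalar (Fin 3) (max (B 0 0) (max (B 1 1) (B 2 2))) - B).det ≤ 0 := by
  set m := max (B 0 0) (max (B 1 1) (B 2 2))
  have h0 : B 0 0 ≤ m := le_max_left _ _
  have h1 : B 1 1 ≤ m := (le_max_left _ _).trans (le_max_right _ _)
  have h2 : B 2 2 ≤ m := (le_max_right _ _).trans (le_max_right _ _)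
  have hm : m = B 0 0 ∨ m = B 1 1 ∨ m = B 2 2 := by
    rcases max_choice (B 0 0) (max (B 1 1) (B 2 2)) with h | h
    · exact .inl h
    · exact .inr ((max_choice _ _).imp h.trans h.trans)
  have hzero : (m - B 0 0) * (m - B 1 1) * (m - B 2 2) = 0 := by
    rcases hm with h | h | h <;> rw [← h] <;> ring
  have hdet : (scalar (Fin 3) m - B).det = (m - B 0 0) * (m - B 1 1) * (m - B 2 2)
      - (m - B 0 0) * (B 1 2 * B 2 1) - (m - B 1 1) * (B 0 2 * B 2 0)
      - (m - B 2 2) * (B 0 1 * B 1 0) - B 0 1 * B 1 2 * B 2 0 - B 0 2 * B 1 0 * B 2 1 := by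
    simp only [scalar_apply, det_fin_three, sub_apply, diagonal_apply_eq, ne_eq, Fin.reduceEq,
      not_false_eq_true, diagonal_apply_ne, zero_sub, mul_neg, neg_mul, neg_neg]
    ring
  rw [hdet, hzero]
  linarith [mul_nonneg (sub_nonneg.2 h0) (mul_nonneg (hB 1 2) (hB 2 1)),
    mul_nonneg (sub_nonneg.2 h1) (mul_nonneg (hB 0 2) (hB 2 0)),
    mul_nonneg (sub_nonneg.2 h2) (mul_nonneg (hB 0 1) (hB 1 0)),
    mul_nonneg (mul_nonneg (hB 0 1) (hB 1 2)) (hB 2 0),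
    mul_nonneg (mul_nonneg (hB 0 2) (hB 1 0)) (hB 2 1)]

def IsRealization {n : Type*} [Fintype n] [DecidableEq n] (B : Matrix n n ℝ) (d : ℝ)
    (ω : n → ℝ) (p : ℝ[X]) : Prop :=
  (∀ i j, 0 ≤ B i j) ∧ (∀ i, ∑ j, B i j = d) ∧ B.diag = ω ∧ B.charpoly = p

theorem IsRealization.submatrix {m n : Type*} [Fintype m] [DecidableEq m] [Fintype n]
    [DecidableEq n] {B : Matrix n n ℝ} {d : ℝ} {ω : n → ℝ} {p : ℝ[X]}
    (hB : B.IsRealization d ω p) (e : m ≃ n) : (B.submatrix e e).IsRealization d (ω ∘ e) p := by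
  obtain ⟨hnonneg, hrow, rfl, rfl⟩ := hB
  refine ⟨fun i j => hnonneg _ _, fun i => ?_, rfl, ?_⟩
  · simpa only [submatrix_apply] using (e.sum_comp (B (e i))).trans (hrow (e i))
  · exact charpoly_reindex e.symm B

end Matrix

-- With this hypothesis, `x ^ 2 - (z + w).re * x + (z * w).re` is the real quadratic with roots
-- `z` and `w`.
def IsConjPair (z w : ℂ) : Prop :=
  w = starRingEnd ℂ z ∨ (z.im = 0 ∧ w.im = 0 ∧ w.re ≤ z.re)

namespace IsConjPair

variable {z w : ℂ}

theorem ofReal_re_add (h : IsConjPair z w) : ((z + w).re : ℂ) = z + w := by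
  refine Complex.ext rfl ?_
  rcases h with rfl | ⟨hz, hw, -⟩ <;> simp [*]

theorem ofReal_re_mul (h : IsConjPair z w) : ((z * w).re : ℂ) = z * w := by
  refine Complex.ext rfl ?_
  rw [Complex.ofReal_im, Complex.mul_im, eq_comm]
  rcases h with rfl | ⟨hz, hw, -⟩
  · rw [Complex.conj_re, Complex.conj_im]
    ring
  · rw [hz, hw]
    ring

theorem quadratic_nonneg (h : IsConjPair z w) {x : ℝ} (hx : z.re ≤ x) :
    0 ≤ x ^ 2 - (z + w).re * x + (z * w).re := by
  rcases h with rfl | ⟨hz, hw, hwz⟩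
  · simp only [Complex.add_re, Complex.conj_re, Complex.mul_re, Complex.conj_im, mul_neg,
      sub_neg_eq_add]
    nlinarith [sq_nonneg (x - z.re), sq_nonneg z.im]
  · simp only [Complex.add_re, Complex.mul_re, hz, hw, mul_zero, sub_zero]
    nlinarith [mul_nonneg (sub_nonneg.2 hx) (sub_nonneg.2 (hwz.trans hx))]

theorem quadratic_neg (h : IsConjPair z w) {x : ℝ} (hwx : (z + w).re - z.re < x)
    (hxz : x < z.re) : x ^ 2 - (z + w).re * x + (z * w).re < 0 := by
  rcases h with rfl | ⟨hz, hw, -⟩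
  · -- for a non-real pair the interval `((z + w).re - z.re, z.re)` is empty
    simp only [Complex.add_re, Complex.conj_re, add_sub_cancel_right] at hwx
    linarith
  · simp only [Complex.add_re, add_sub_cancel_left, Complex.mul_re, hz, hw, mul_zero, sub_zero]
      at hwx ⊢
    nlinarith [mul_pos (sub_pos.2 hxz) (sub_pos.2 hwx)]

theorem charpoly_map_ofReal_eq_iff (h : IsConjPair z w) {n : Type*} [Fintype n] [DecidableEq n]
    (B : Matrix n n ℝ) (d : ℝ) :
    (B.map Complex.ofReal).charpoly = (X - C (d : ℂ)) * (X - C z) * (X - C w) ↔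
      B.charpoly = (X - C d) * (X ^ 2 - C (z + w).re * X + C (z * w).re) := by
  have hmap : (X - C (d : ℂ)) * (X - C z) * (X - C w) =
      ((X - C d) * (X ^ 2 - C (z + w).re * X + C (z * w).re)).map Complex.ofRealHom := by
    simp only [Polynomial.map_mul, Polynomial.map_sub, Polynomial.map_add, Polynomial.map_pow,
      map_X, map_C, Complex.ofRealHom_eq_coe, h.ofReal_re_add, h.ofReal_re_mul, map_add, map_mul]
    ring
  rw [show B.map Complex.ofReal = B.map Complex.ofRealHom from rfl, charpoly_map, hmap]
  exact (map_injective _ Complex.ofReal_injective).eq_iff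

end IsConjPair

theorem isRealization_of_mul_sub_eq {d T P a b c y : ℝ} (ha : 0 ≤ a) (hb : 0 ≤ b) (hbd : b ≤ d)
    (hc : 0 ≤ c) (hcd : c ≤ d) (hy : 0 ≤ y) (hya : y ≤ d - a) (hsum : a + b + c = d + T)
    (hyeq : (d - b) * (y - (d - c)) = (b + c - d) * a - P) :
    (!![a, y, d - a - y; d - b, b, 0; 0, d - c, c]).IsRealization d ![a, b, c]
      ((X - C d) * (X ^ 2 - C T * X + C P)) := by
  refine ⟨?_, ?_, ?_, ?_⟩
  · intro i j
    fin_cases i <;> fin_cases j <;> simp <;> linarith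
  · intro i
    fin_cases i <;> simp [Fin.sum_univ_three]
  · ext i
    fin_cases i <;> rfl
  · rw [X_sub_C_mul_quadratic, charpoly_fin_three_eq_iff]
    simp only [trace_fin_three, det_fin_three, of_apply, cons_val', cons_val_zero, cons_val_fin_one,
      cons_val_one, Matrix.cons_val, mul_zero, sub_zero, zero_mul, add_zero]
    refine ⟨by linarith, by linear_combination (-1) * hyeq + d * hsum,
      by linear_combination (-d) * hyeq⟩

theorem exists_isRealization_of_le_right {d T P a b c : ℝ} (ha : 0 ≤ a) (hb : 0 ≤ b) (hbd : b ≤ d)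
    (hac : a ≤ c) (hcd : c ≤ d) (hsum : a + b + c = d + T)
    (he2 : d * T + P ≤ a * b + a * c + b * c) (hq : 0 ≤ c ^ 2 - T * c + P) :
    ∃ B : Matrix (Fin 3) (Fin 3) ℝ, B.IsRealization d ![a, b, c]
      ((X - C d) * (X ^ 2 - C T * X + C P)) := by
  set R := (b + c - d) * a - P
  have hRlow : -((d - b) * (d - c)) ≤ R := by nlinarith
  have hRup : R ≤ (d - b) * (c - a) := by nlinarith
  rcases hbd.lt_or_eq with hlt | rfl
  · have hdb : 0 < d - b := sub_pos.2 hlt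
    refine ⟨_, isRealization_of_mul_sub_eq (y := d - c + R / (d - b)) ha hb hbd (ha.trans hac) hcd
      ?_ ?_ hsum ?_⟩
    · have : -(d - c) ≤ R / (d - b) := by rw [le_div_iff₀ hdb]; linarith
      linarith
    · have : R / (d - b) ≤ c - a := by rw [div_le_iff₀ hdb]; linarith
      linarith
    · field_simp
      ring
  · have hR : R = 0 := by simp only [sub_self, zero_mul, neg_zero] at hRlow hRup; linarith
    exact ⟨_, isRealization_of_mul_sub_eq (y := b - c) ha hb le_rfl (ha.trans hac) hcd
      (by linarith) (by linarith) hsum (by rw [sub_self, zero_mul]; exact hR.symm)⟩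

theorem exists_isRealization_of_max {d T P a b c : ℝ} (ha : 0 ≤ a) (had : a ≤ d) (hb : 0 ≤ b)
    (hbd : b ≤ d) (hc : 0 ≤ c) (hcd : c ≤ d) (hsum : a + b + c = d + T)
    (he2 : d * T + P ≤ a * b + a * c + b * c)
    (hq : 0 ≤ max a (max b c) ^ 2 - T * max a (max b c) + P) :
    ∃ B : Matrix (Fin 3) (Fin 3) ℝ, B.IsRealization d ![a, b, c]
      ((X - C d) * (X ^ 2 - C T * X + C P)) := by
  rcases max_cases a (max b c) with ⟨hm, hbca⟩ | ⟨hm, habc⟩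
  · rw [hm] at hq
    obtain ⟨B, hB⟩ := exists_isRealization_of_le_right hc hb hbd (le_of_max_le_right hbca) had
      (by linarith) (by linarith) hq
    have hperm : ![c, b, a] ∘ Equiv.swap 0 2 = ![a, b, c] := by ext i; fin_cases i <;> rfl
    exact ⟨_, hperm ▸ hB.submatrix _⟩
  rcases max_cases b c with ⟨hm', hcb⟩ | ⟨hm', hbc⟩
  · rw [hm, hm'] at hq
    obtain ⟨B, hB⟩ := exists_isRealization_of_le_right ha hc hcd (by linarith) hbd
      (by linarith) (by linarith) hq
    have hperm : ![a, c, b] ∘ Equiv.swap 1 2 = ![a, b, c] := by ext i; fin_cases i <;> rfl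
    exact ⟨_, hperm ▸ hB.submatrix _⟩
  · rw [hm, hm'] at hq
    exact exists_isRealization_of_le_right ha hb hbd (by linarith) hcd hsum he2 hq

theorem trace_eq_of_charpoly_eq {B : Matrix (Fin 3) (Fin 3) ℝ} {d T P : ℝ}
    (hcp : B.charpoly = (X - C d) * (X ^ 2 - C T * X + C P)) :
    B 0 0 + B 1 1 + B 2 2 = d + T := by
  rw [X_sub_C_mul_quadratic, charpoly_fin_three_eq_iff] at hcp
  exact (trace_fin_three B).symm.trans hcp.1

theorem le_sum_mul_diag_of_charpoly_eq {B : Matrix (Fin 3) (Fin 3) ℝ} {d T P : ℝ}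
    (hB : ∀ i j, 0 ≤ B i j) (hcp : B.charpoly = (X - C d) * (X ^ 2 - C T * X + C P)) :
    d * T + P ≤ B 0 0 * B 1 1 + B 0 0 * B 2 2 + B 1 1 * B 2 2 := by
  rw [X_sub_C_mul_quadratic, charpoly_fin_three_eq_iff] at hcp
  nlinarith [hcp.2.1, mul_nonneg (hB 0 1) (hB 1 0), mul_nonneg (hB 0 2) (hB 2 0),
    mul_nonneg (hB 1 2) (hB 2 1)]

theorem IsConjPair.re_le_max_diag {z w : ℂ} (h : IsConjPair z w) {d : ℝ} (hzd : z.re ≤ d)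
    {B : Matrix (Fin 3) (Fin 3) ℝ} (hB : ∀ i j, 0 ≤ B i j)
    (hcp : B.charpoly = (X - C d) * (X ^ 2 - C (z + w).re * X + C (z * w).re)) :
    z.re ≤ max (B 0 0) (max (B 1 1) (B 2 2)) := by
  set m := max (B 0 0) (max (B 1 1) (B 2 2))
  by_contra! hmz
  have htr := trace_eq_of_charpoly_eq hcp
  have h0 : B 0 0 ≤ m := le_max_left _ _
  have h1 : B 1 1 ≤ m := (le_max_left _ _).trans (le_max_right _ _)
  have h2 : B 2 2 ≤ m := (le_max_right _ _).trans (le_max_right _ _)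
  have hq := h.quadratic_neg (x := m) (by linarith) hmz
  have heval : B.charpoly.eval m ≤ 0 := (eval_charpoly B m).symm ▸ det_scalar_max_diag_sub_nonpos hB
  rw [hcp] at heval
  simp only [eval_mul, eval_add, eval_sub, eval_pow, eval_X, eval_C] at heval
  nlinarith [mul_pos (sub_pos.2 (hmz.trans_le hzd)) (neg_pos.2 hq)]

theorem perfect_lemma_general (lam1 : ℝ) (lam2 lam3 : ℂ)
    (hconj : lam3 = starRingEnd ℂ lam2 ∨ (lam2.im = 0 ∧ lam3.im = 0 ∧ lam3.re ≤ lam2.re))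
    (hp2 : ‖lam2‖ ≤ lam1)
    (ω1 ω2 ω3 : ℝ) :
    (∃ B : Matrix (Fin 3) (Fin 3) ℝ, (∀ i j, 0 ≤ B i j) ∧
      (∀ i, ∑ j, B i j = lam1) ∧
      B 0 0 = ω1 ∧ B 1 1 = ω2 ∧ B 2 2 = ω3 ∧
      (B.map Complex.ofReal).charpoly =
        (X - C (lam1 : ℂ)) * (X - C lam2) * (X - C lam3)) ↔
    ((0 ≤ ω1 ∧ ω1 ≤ lam1) ∧ (0 ≤ ω2 ∧ ω2 ≤ lam1) ∧ (0 ≤ ω3 ∧ ω3 ≤ lam1) ∧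
      ((ω1 + ω2 + ω3 : ℝ) : ℂ) = (lam1 : ℂ) + lam2 + lam3 ∧
      ((lam1 : ℂ) * lam2 + (lam1 : ℂ) * lam3 + lam2 * lam3).re ≤
        ω1 * ω2 + ω1 * ω3 + ω2 * ω3 ∧
      lam2.re ≤ max ω1 (max ω2 ω3)) := by
  have hpair : IsConjPair lam2 lam3 := hconj
  have htrace : ((ω1 + ω2 + ω3 : ℝ) : ℂ) = lam1 + lam2 + lam3 ↔
      ω1 + ω2 + ω3 = lam1 + (lam2 + lam3).re := by
    rw [add_assoc (lam1 : ℂ), ← hpair.ofReal_re_add]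
    norm_cast
  have hmiddle : ((lam1 : ℂ) * lam2 + lam1 * lam3 + lam2 * lam3).re =
      lam1 * (lam2 + lam3).re + (lam2 * lam3).re := by
    simp only [Complex.add_re, Complex.re_ofReal_mul]
    ring
  simp only [hpair.charpoly_map_ofReal_eq_iff, htrace, hmiddle]
  constructor
  · rintro ⟨B, hB, hrow, rfl, rfl, rfl, hcp⟩
    have hdiag (i : Fin 3) : B i i ≤ lam1 := hrow i ▸ single_le_sum (fun j _ => hB i j) (mem_univ i)
    exact ⟨⟨hB 0 0, hdiag 0⟩, ⟨hB 1 1, hdiag 1⟩, ⟨hB 2 2, hdiag 2⟩, trace_eq_of_charpoly_eq hcp,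
      le_sum_mul_diag_of_charpoly_eq hB hcp,
      hpair.re_le_max_diag ((Complex.re_le_norm lam2).trans hp2) hB hcp⟩
  · rintro ⟨⟨h1, h1'⟩, ⟨h2, h2'⟩, ⟨h3, h3'⟩, hsum, he2, hmax⟩
    obtain ⟨B, hB, hrow, hdiag, hcp⟩ :=
      exists_isRealization_of_max h1 h1' h2 h2' h3 h3' hsum he2 (hpair.quadratic_nonneg hmax)
    exact ⟨B, hB, hrow, congr_fun hdiag 0, congr_fun hdiag 1, congr_fun hdiag 2, hcp⟩

/-- **Perfect's lemma.** The numbers `ω_1, ω_2, ω_3` and `λ_1, λ_2, λ_3`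
(`λ_1 ≥ |λ_i|`, `{λ_2, λ_3}` closed under conjugation) are respectively the diagonal
entries and the eigenvalues of a `3 × 3` nonnegative matrix with all row sums `λ_1`
iff (i) `0 ≤ ω_k ≤ λ_1`; (ii) `ω_1 + ω_2 + ω_3 = λ_1 + λ_2 + λ_3`;
(iii) `ω_1ω_2 + ω_1ω_3 + ω_2ω_3 ≥ Re(λ_1λ_2 + λ_1λ_3 + λ_2λ_3)`; and
(iv) `max ω_k ≥ Re λ_2`. -/
theorem perfect_lemma (lam1 : ℝ) (lam2 lam3 : ℂ)
    (hconj : lam3 = starRingEnd ℂ lam2 ∨ (lam2.im = 0 ∧ lam3.im = 0 ∧ lam3.re ≤ lam2.re))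
    (hp2 : ‖lam2‖ ≤ lam1) (hp3 : ‖lam3‖ ≤ lam1)
    (ω1 ω2 ω3 : ℝ) :
    (∃ B : Matrix (Fin 3) (Fin 3) ℝ, (∀ i j, 0 ≤ B i j) ∧
      (∀ i, ∑ j, B i j = lam1) ∧
      B 0 0 = ω1 ∧ B 1 1 = ω2 ∧ B 2 2 = ω3 ∧
      (B.map Complex.ofReal).charpoly =
        (X - C (lam1 : ℂ)) * (X - C lam2) * (X - C lam3)) ↔
    ((0 ≤ ω1 ∧ ω1 ≤ lam1) ∧ (0 ≤ ω2 ∧ ω2 ≤ lam1) ∧ (0 ≤ ω3 ∧ ω3 ≤ lam1) ∧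
      ((ω1 + ω2 + ω3 : ℝ) : ℂ) = (lam1 : ℂ) + lam2 + lam3 ∧
      ((lam1 : ℂ) * lam2 + (lam1 : ℂ) * lam3 + lam2 * lam3).re ≤
        ω1 * ω2 + ω1 * ω3 + ω2 * ω3 ∧
      lam2.re ≤ max ω1 (max ω2 ω3)) :=
  perfect_lemma_general lam1 lam2 lam3 hconj hp2 ω1 ω2 ω3
end

section
/- (Šmigoc's complex Suleimanova theorem) Let Λ = (λ_1, λ_2, …, λ_n) be a list of complex numbers that is closed under complex conjugation, with λ_1 real, and such that for every i ≥ 2 one has Re(λ_i) ≤ 0 and |Im(λ_i)| ≤ √3·|Re(λ_i)|. Then Λ is realizable if and only if ∑_{i=1}^n λ_i ≥ 0 (this sum is real since Λ is closed under conjugation). -/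
/-!
Necessity: the trace of a nonnegative matrix is nonnegative. Sufficiency: split `λ₂, …, λₙ` into
real numbers `x ≤ 0` and conjugate pairs `z, z̄`, with real factors `X - x` and
`X² - 2 Re z X + |z|²`. Both have nonnegative coefficients with `q_j ≤ c q_{j+1}` below the top,
for `c = -x` and `c = -2 Re z` respectively; for the quadratic this is `|z|² ≤ 4 (Re z)²`, which is
exactly `|Im z| ≤ √3 |Re z|`. Such ratio bounds add up under multiplication, so
`q = ∏_{i ≥ 2} (X - λ_i)` satisfies one with `c = -∑_{i ≥ 2} Re λ_i ≤ λ₁`. Then every non-leading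
coefficient `q_{j-1} - λ₁ q_j` of `(X - λ₁) q` is `≤ 0`, and its companion matrix is nonnegative.
-/

open Polynomial Matrix Finset

def Realizable {n : ℕ} (l : Fin n → ℂ) : Prop :=
  ∃ A : Matrix (Fin n) (Fin n) ℝ, (∀ i j, 0 ≤ A i j) ∧
    (A.map (Complex.ofReal)).charpoly = ∏ i, (X - C (l i))

open ComplexConjugate Complex

def companionMat {R : Type*} [CommRing R] (n : ℕ) (a : Fin n → R) : Matrix (Fin n) (Fin n) R :=
  Matrix.of fun i j => if (i : ℕ) = (j : ℕ) + 1 then 1 else if (j : ℕ) = n - 1 then a i else 0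

section Companion

variable {R : Type*} [CommRing R]

theorem charmatrix_companionMat_zero_apply {k : ℕ} (a : Fin (k + 1) → R) (j : Fin (k + 1)) :
    charmatrix (companionMat (k + 1) a) 0 j
      = (if j = 0 then X else 0) - (if j = Fin.last k then C (a 0) else 0) := by
  simp only [charmatrix_apply, diagonal_apply, companionMat, of_apply, Fin.val_zero,
    Fin.ext_iff, Fin.val_last]
  simp [apply_ite C, eq_comm (a := (0 : ℕ))]

theorem charmatrix_companionMat_submatrix_succ {k : ℕ} (a : Fin (k + 1) → R) :
    (charmatrix (companionMat (k + 1) a)).submatrix Fin.succ Fin.succ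
      = charmatrix (companionMat k (a ∘ Fin.succ)) := by
  ext i j
  simp only [submatrix_apply, charmatrix_apply, diagonal_apply, Fin.succ_inj, companionMat,
    of_apply, Fin.val_succ, Function.comp_apply]
  congr 3
  by_cases h : (i : ℕ) = j + 1
  · simp [h]
  · simp only [h, if_false, show ¬ ((i : ℕ) + 1 = j + 1 + 1) by omega]
    congr 1
    simp only [add_tsub_cancel_right, eq_iff_iff]
    omega

theorem det_charmatrix_companionMat_submatrix_castSucc {k : ℕ} (a : Fin (k + 1) → R) :
    ((charmatrix (companionMat (k + 1) a)).submatrix Fin.succ Fin.castSucc).det = (-1) ^ k := by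
  have hentry : ∀ i j : Fin k, (charmatrix (companionMat (k + 1) a)).submatrix Fin.succ
      Fin.castSucc i j = (if (i : ℕ) + 1 = j then X else 0) - (if i = j then 1 else 0) := by
    intro i j
    simp only [submatrix_apply, charmatrix_apply, diagonal_apply, companionMat, of_apply,
      Fin.ext_iff, Fin.val_succ, Fin.val_castSucc, add_left_inj]
    have hj : (j : ℕ) ≠ k := j.isLt.ne
    simp [hj, apply_ite C]
  rw [det_of_isUpperTriangular, prod_congr rfl fun i _ => hentry i i]
  · simp
  · intro i j (hji : j < i)
    rw [hentry, if_neg (by omega), if_neg hji.ne', sub_zero]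

theorem charpoly_companionMat_succ {k : ℕ} (a : Fin (k + 1) → R) :
    (companionMat (k + 1) a).charpoly = X * (companionMat k (a ∘ Fin.succ)).charpoly - C (a 0) := by
  rw [charpoly, det_succ_row_zero]
  simp_rw [charmatrix_companionMat_zero_apply, mul_sub, sub_mul, sum_sub_distrib, mul_ite,
    ite_mul, mul_zero, zero_mul, sum_ite_eq', mem_univ, if_true, Fin.succAbove_zero,
    Fin.succAbove_last, charmatrix_companionMat_submatrix_succ,
    det_charmatrix_companionMat_submatrix_castSucc, Fin.val_zero, Fin.val_last]
  have hsign : ((-1 : R[X]) ^ k) * (-1) ^ k = 1 := by rw [← mul_pow]; simp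
  rw [charpoly]
  linear_combination (-C (a 0)) * hsign

theorem charpoly_companionMat (n : ℕ) (a : Fin n → R) :
    (companionMat n a).charpoly = X ^ n - ∑ j : Fin n, C (a j) * X ^ (j : ℕ) := by
  induction n with
  | zero => simp [charpoly, det_isEmpty]
  | succ k ih =>
    rw [charpoly_companionMat_succ, ih, Fin.sum_univ_succ]
    simp only [Function.comp_apply, Fin.val_zero, Fin.val_succ, pow_zero, mul_one, mul_sub,
      mul_sum, mul_left_comm X, ← pow_succ']
    ring

theorem charpoly_companionMat_neg_coeff {p : R[X]} (hp : p.Monic) :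
    (companionMat p.natDegree fun i => -p.coeff i).charpoly = p := by
  rw [charpoly_companionMat]
  conv_rhs => rw [hp.as_sum, ← Fin.sum_univ_eq_sum_range (fun i => C (p.coeff i) * X ^ i)]
  simp [sub_eq_add_neg]

end Companion

theorem realizable_of_map_eq_prod {n : ℕ} {l : Fin n → ℂ} {p : ℝ[X]}
    (hmap : p.map ofRealHom = ∏ i, (X - C (l i)))
    (hcoeff : ∀ j < p.natDegree, p.coeff j ≤ 0) : Realizable l := by
  have hmonic : p.Monic := by
    rw [← monic_map_iff (f := ofRealHom), hmap]
    exact monic_prod_of_monic _ _ fun i _ => monic_X_sub_C _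
  obtain rfl : p.natDegree = n := by
    rw [← natDegree_map_eq_of_injective ofRealHom.injective, hmap,
      natDegree_prod_of_monic _ _ fun i _ => monic_X_sub_C _]
    simp
  refine ⟨companionMat p.natDegree fun i => -p.coeff i, fun i j => ?_, ?_⟩
  · simp only [companionMat, of_apply]
    split_ifs
    · exact zero_le_one
    · exact neg_nonneg.mpr (hcoeff i i.isLt)
    · exact le_rfl
  · change ((companionMat _ _).map ofRealHom).charpoly = _
    rw [charpoly_map, charpoly_companionMat_neg_coeff hmonic, hmap]

theorem Realizable.re_sum_nonneg {n : ℕ} {l : Fin n → ℂ} (h : Realizable l) :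
    0 ≤ (∑ i, l i).re := by
  obtain ⟨A, hA, hchar⟩ := h
  have hroots : (∏ i, (X - C (l i))).roots = univ.val.map l := by
    rw [prod_eq_multiset_prod, ← roots_multiset_prod_X_sub_C (univ.val.map l), Multiset.map_map]
    rfl
  have htrace : ∑ i, l i = (A.trace : ℂ) := by
    calc ∑ i, l i = (A.map ofReal).trace := by
          rw [trace_eq_sum_roots_charpoly, hchar, hroots, sum_eq_multiset_sum]
      _ = (A.trace : ℂ) := by simp [trace]
  rw [htrace, ofReal_re]
  exact sum_nonneg fun i _ => hA i i

section CoeffRatio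

variable {R : Type*}

def CoeffRatioLE [Semiring R] [LE R] (c : R) (q : R[X]) : Prop :=
  ∀ j < q.natDegree, q.coeff j ≤ c * q.coeff (j + 1)

theorem coeff_mul_nonneg [Semiring R] [PartialOrder R] [IsOrderedRing R] {f g : R[X]}
    (hf : ∀ j, 0 ≤ f.coeff j) (hg : ∀ j, 0 ≤ g.coeff j) (j : ℕ) : 0 ≤ (f * g).coeff j := by
  rw [coeff_mul]
  exact sum_nonneg fun x _ => mul_nonneg (hf _) (hg _)

theorem CoeffRatioLE.mul [CommRing R] [LinearOrder R] [IsStrictOrderedRing R] {a b : R}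
    {f g : R[X]} (hf : CoeffRatioLE a f) (hg : CoeffRatioLE b g)
    (hf0 : ∀ j, 0 ≤ f.coeff j) (hg0 : ∀ j, 0 ≤ g.coeff j) (ha : 0 ≤ a) (hb : 0 ≤ b) :
    CoeffRatioLE (a + b) (f * g) := by
  intro j hj
  have hj' : j < f.natDegree + g.natDegree := hj.trans_le natDegree_mul_le
  -- each term of `(f * g).coeff j` is shifted up in `f` or, at the top of `f`, in `g`
  have hterm : ∀ x ∈ antidiagonal j, f.coeff x.1 * g.coeff x.2 ≤
      a * (f.coeff (x.1 + 1) * g.coeff x.2) + b * (f.coeff x.1 * g.coeff (x.2 + 1)) := by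
    rintro ⟨i, k⟩ hik
    rw [HasAntidiagonal.mem_antidiagonal] at hik
    have hfg := mul_nonneg (hf0 i) (hg0 (k + 1))
    have hfg' := mul_nonneg (hf0 (i + 1)) (hg0 k)
    by_cases hi : i < f.natDegree
    · nlinarith [mul_le_mul_of_nonneg_right (hf i hi) (hg0 k)]
    · nlinarith [mul_le_mul_of_nonneg_left (hg k (by omega)) (hf0 i)]
  have hshift_f :
      ∑ x ∈ antidiagonal j, f.coeff (x.1 + 1) * g.coeff x.2 ≤ (f * g).coeff (j + 1) := by
    rw [coeff_mul, Nat.sum_antidiagonal_succ]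
    exact le_add_of_nonneg_left (mul_nonneg (hf0 _) (hg0 _))
  have hshift_g :
      ∑ x ∈ antidiagonal j, f.coeff x.1 * g.coeff (x.2 + 1) ≤ (f * g).coeff (j + 1) := by
    rw [coeff_mul, Nat.sum_antidiagonal_succ']
    exact le_add_of_nonneg_left (mul_nonneg (hf0 _) (hg0 _))
  calc (f * g).coeff j = ∑ x ∈ antidiagonal j, f.coeff x.1 * g.coeff x.2 := coeff_mul f g j
    _ ≤ ∑ x ∈ antidiagonal j, (a * (f.coeff (x.1 + 1) * g.coeff x.2)
          + b * (f.coeff x.1 * g.coeff (x.2 + 1))) := sum_le_sum hterm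
    _ = a * ∑ x ∈ antidiagonal j, f.coeff (x.1 + 1) * g.coeff x.2
          + b * ∑ x ∈ antidiagonal j, f.coeff x.1 * g.coeff (x.2 + 1) := by
        rw [sum_add_distrib, mul_sum, mul_sum]
    _ ≤ (a + b) * (f * g).coeff (j + 1) := by
        nlinarith [mul_le_mul_of_nonneg_left hshift_f ha, mul_le_mul_of_nonneg_left hshift_g hb]

theorem coeffRatioLE_X_add_C [Semiring R] [Nontrivial R] [Preorder R] (m : R) :
    CoeffRatioLE m (X + C m) := by
  intro j hj
  rw [natDegree_X_add_C] at hj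
  obtain rfl : j = 0 := by omega
  simp

theorem coeffRatioLE_quadratic [Semiring R] [Preorder R] {p r : R} (hr : r ≤ p * p) :
    CoeffRatioLE p (X ^ 2 + C p * X + C r) := by
  intro j hj
  have h2 : (X ^ 2 + C p * X + C r).natDegree ≤ 2 := by compute_degree
  have hj2 : j < 2 := hj.trans_le h2
  interval_cases j <;> simp [coeff_X, coeff_C, hr]

theorem coeff_X_add_C_nonneg [Semiring R] [Preorder R] [ZeroLEOneClass R] {m : R} (hm : 0 ≤ m)
    (j : ℕ) : 0 ≤ (X + C m).coeff j := by
  rcases j with _ | _ | j <;> simp [coeff_X, coeff_C, hm]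

theorem coeff_quadratic_nonneg [Semiring R] [Preorder R] [ZeroLEOneClass R] {p r : R}
    (hp : 0 ≤ p) (hr : 0 ≤ r) (j : ℕ) :
    0 ≤ (X ^ 2 + C p * X + C r).coeff j := by
  rcases j with _ | _ | _ | j <;> simp [coeff_X, coeff_C, hp, hr]

end CoeffRatio

@[elab_as_elim]
theorem Multiset.conj_closed_induction {P : Multiset ℂ → Prop} (zero : P 0)
    (real : ∀ (x : ℝ) (s : Multiset ℂ), P s → P ((x : ℂ) ::ₘ s))
    (pair : ∀ (z : ℂ) (s : Multiset ℂ), P s → P (z ::ₘ conj z ::ₘ s)) :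
    ∀ S : Multiset ℂ, S.map conj = S → P S := by
  intro S
  induction S using Multiset.strongInductionOn with
  | _ S IH =>
  intro hS
  rcases S.empty_or_exists_mem with rfl | ⟨z, hz⟩
  · exact zero
  have hinj : Function.Injective (conj : ℂ → ℂ) := star_injective
  by_cases him : z.im = 0
  · obtain ⟨x, rfl⟩ : ∃ x : ℝ, (x : ℂ) = z := ⟨z.re, Complex.ext rfl (by simp [him])⟩
    rw [← Multiset.cons_erase hz]
    refine real x _ (IH _ (Multiset.erase_lt.mpr hz) ?_)
    rw [Multiset.map_erase _ hinj, hS, conj_ofReal]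
  · have hwz : conj z ≠ z := fun h => him (conj_eq_iff_im.mp h)
    have hw : conj z ∈ S.erase z :=
      (Multiset.mem_erase_of_ne hwz).mpr (hS ▸ Multiset.mem_map_of_mem _ hz)
    rw [← Multiset.cons_erase hz, ← Multiset.cons_erase hw]
    refine pair _ _ (IH _ ((Multiset.erase_lt.mpr hw).trans (Multiset.erase_lt.mpr hz)) ?_)
    rw [Multiset.map_erase _ hinj, Multiset.map_erase _ hinj, hS, conj_conj,
      Multiset.erase_comm]

theorem Complex.normSq_le_of_abs_im_le {z : ℂ} (h : |z.im| ≤ √3 * |z.re|) :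
    normSq z ≤ (-2 * z.re) * (-2 * z.re) := by
  have h3 : z.im ^ 2 ≤ 3 * z.re ^ 2 := by
    calc z.im ^ 2 = |z.im| ^ 2 := (sq_abs _).symm
      _ ≤ (√3 * |z.re|) ^ 2 := pow_le_pow_left₀ (abs_nonneg _) h 2
      _ = 3 * z.re ^ 2 := by rw [mul_pow, Real.sq_sqrt (by norm_num), sq_abs]
  rw [normSq_apply]
  nlinarith

theorem map_quadratic_eq_mul_conj (z : ℂ) :
    (X ^ 2 + C (-2 * z.re) * X + C (normSq z)).map ofRealHom
      = (X - C z) * (X - C (conj z)) := by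
  have hsum : ((-2 * z.re : ℝ) : ℂ) = -(z + conj z) := by rw [add_conj]; push_cast; ring
  have hprod : ((normSq z : ℝ) : ℂ) = z * conj z := (mul_conj z).symm
  rw [Polynomial.map_add, Polynomial.map_add, Polynomial.map_mul, Polynomial.map_pow, map_X,
    map_C, map_C, ofRealHom_eq_coe, ofRealHom_eq_coe, hsum, hprod]
  simp only [map_neg, map_add, map_mul]
  ring

theorem Multiset.sum_map_re_nonpos {s : Multiset ℂ} (h : ∀ z ∈ s, z.re ≤ 0) :
    (s.map re).sum ≤ 0 := by
  simpa using Multiset.sum_le_card_nsmul (s.map re) 0 (by simpa using h)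

theorem exists_real_poly_coeffRatioLE (S : Multiset ℂ) (hS : S.map conj = S)
    (hsec : ∀ z ∈ S, z.re ≤ 0 ∧ |z.im| ≤ √3 * |z.re|) :
    ∃ q : ℝ[X], q.map ofRealHom = (S.map fun z => X - C z).prod ∧
      (∀ j, 0 ≤ q.coeff j) ∧ CoeffRatioLE (-(S.map re).sum) q := by
  revert hsec
  refine Multiset.conj_closed_induction ?_ ?_ ?_ S hS
  · intro _
    refine ⟨1, by simp, fun j => ?_, fun j hj => by simp at hj⟩
    rw [coeff_one]; split_ifs <;> norm_num
  · intro x s ih hsec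
    have hsec_s z (hz : z ∈ s) := hsec z (Multiset.mem_cons_of_mem hz)
    obtain ⟨q, hmap, hq0, hq⟩ := ih hsec_s
    have hc : 0 ≤ -(s.map re).sum :=
      neg_nonneg.mpr (Multiset.sum_map_re_nonpos fun z hz => (hsec_s z hz).1)
    have hx : 0 ≤ -x := by simpa using (hsec x (Multiset.mem_cons_self _ _)).1
    refine ⟨(X + C (-x)) * q, ?_, coeff_mul_nonneg (coeff_X_add_C_nonneg hx) hq0, ?_⟩
    · simp [hmap, sub_eq_add_neg]
    · rw [Multiset.map_cons, Multiset.sum_cons, ofReal_re, neg_add]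
      exact (coeffRatioLE_X_add_C (-x)).mul hq (coeff_X_add_C_nonneg hx) hq0 hx hc
  · intro z s ih hsec
    have hsec_s w (hw : w ∈ s) := hsec w (Multiset.mem_cons_of_mem (Multiset.mem_cons_of_mem hw))
    obtain ⟨q, hmap, hq0, hq⟩ := ih hsec_s
    have hc : 0 ≤ -(s.map re).sum :=
      neg_nonneg.mpr (Multiset.sum_map_re_nonpos fun z hz => (hsec_s z hz).1)
    obtain ⟨hre, him⟩ := hsec z (Multiset.mem_cons_self _ _)
    have hp : 0 ≤ -2 * z.re := by linarith
    have hr : 0 ≤ normSq z := normSq_nonneg z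
    refine ⟨(X ^ 2 + C (-2 * z.re) * X + C (normSq z)) * q, ?_,
      coeff_mul_nonneg (coeff_quadratic_nonneg hp hr) hq0, ?_⟩
    · rw [Polynomial.map_mul, map_quadratic_eq_mul_conj, hmap]
      simp [mul_assoc]
    · have hsum : -((z ::ₘ conj z ::ₘ s).map re).sum = -2 * z.re + -(s.map re).sum := by
        rw [Multiset.map_cons, Multiset.map_cons, Multiset.sum_cons, Multiset.sum_cons, conj_re]
        ring
      rw [hsum]
      exact (coeffRatioLE_quadratic (normSq_le_of_abs_im_le him)).mul hq
        (coeff_quadratic_nonneg hp hr) hq0 hp hc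

theorem coeff_X_sub_C_mul_nonpos {q : ℝ[X]} {c x : ℝ} (hq0 : ∀ j, 0 ≤ q.coeff j)
    (hq : CoeffRatioLE c q) (hc : 0 ≤ c) (hcx : c ≤ x) :
    ∀ j < ((X - C x) * q).natDegree, ((X - C x) * q).coeff j ≤ 0 := by
  intro j hj
  have hdeg : ((X - C x) * q).natDegree ≤ q.natDegree + 1 :=
    natDegree_mul_le.trans_eq (by rw [natDegree_X_sub_C, add_comm])
  rw [sub_mul, coeff_sub, coeff_C_mul]
  rcases j with _ | k
  · rw [coeff_X_mul_zero]
    nlinarith [hq0 0]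
  · rw [coeff_X_mul]
    nlinarith [hq k (by omega), hq0 (k + 1)]

theorem exists_real_poly_coeff_nonpos (x : ℝ) (S : Multiset ℂ) (hS : S.map conj = S)
    (hsec : ∀ z ∈ S, z.re ≤ 0 ∧ |z.im| ≤ √3 * |z.re|) (hx : -(S.map re).sum ≤ x) :
    ∃ p : ℝ[X], p.map ofRealHom = (X - C (x : ℂ)) * (S.map fun z => X - C z).prod ∧
      ∀ j < p.natDegree, p.coeff j ≤ 0 := by
  obtain ⟨q, hmap, hq0, hq⟩ := exists_real_poly_coeffRatioLE S hS hsec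
  have hc : 0 ≤ -(S.map re).sum :=
    neg_nonneg.mpr (Multiset.sum_map_re_nonpos fun z hz => (hsec z hz).1)
  refine ⟨(X - C x) * q, ?_, coeff_X_sub_C_mul_nonpos hq0 hq hc hx⟩
  rw [Polynomial.map_mul, Polynomial.map_sub, map_X, map_C, ofRealHom_eq_coe, hmap]

/-- **Šmigoc's complex Suleimanova theorem.** Let `(λ_1, …, λ_n)` be closed under
complex conjugation with `λ_1` real, and suppose `Re λ_i ≤ 0` and
`|Im λ_i| ≤ √3 |Re λ_i|` for `i ≥ 2`. Then the list is realizable iff `∑ λ_i ≥ 0`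
(the sum being real). -/
theorem smigoc_complex_suleimanova (n : ℕ) (hn : 0 < n) (l : Fin n → ℂ)
    (hconj : Multiset.map (starRingEnd ℂ) (Finset.univ.val.map l) = Finset.univ.val.map l)
    (h1 : (l ⟨0, hn⟩).im = 0)
    (h : ∀ i : Fin n, i ≠ ⟨0, hn⟩ →
      (l i).re ≤ 0 ∧ |(l i).im| ≤ Real.sqrt 3 * |(l i).re|) :
    Realizable l ↔ 0 ≤ (∑ i, l i).re := by
  refine ⟨Realizable.re_sum_nonneg, fun hsum => ?_⟩
  obtain ⟨m, rfl⟩ : ∃ m, n = m + 1 := ⟨n - 1, by omega⟩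
  change (l 0).im = 0 at h1
  set T := univ.val.map fun i : Fin m => l i.succ
  have hT : univ.val.map l = l 0 ::ₘ T := by
    rw [Fin.univ_succ, Finset.cons_val, Multiset.map_cons, map_val, Multiset.map_map]
    rfl
  have hTconj : T.map conj = T := by
    rw [hT, Multiset.map_cons, conj_eq_iff_im.mpr h1] at hconj
    exact (Multiset.cons_inj_right _).mp hconj
  have hTsec : ∀ z ∈ T, z.re ≤ 0 ∧ |z.im| ≤ √3 * |z.re| := by
    simp only [T, Multiset.mem_map, mem_val, mem_univ, true_and, forall_exists_index]
    rintro z i rfl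
    exact h i.succ (Fin.succ_ne_zero i)
  have hsum_re : (∑ i, l i).re = (l 0).re + (T.map re).sum := by
    rw [re_sum, Fin.sum_univ_succ, sum_eq_multiset_sum, Multiset.map_map]
    rfl
  obtain ⟨p, hmap, hp⟩ := exists_real_poly_coeff_nonpos (l 0).re T hTconj hTsec (by linarith)
  refine realizable_of_map_eq_prod ?_ hp
  rw [hmap, Fin.prod_univ_succ, prod_eq_multiset_prod, Multiset.map_map,
    show ((l 0).re : ℂ) = l 0 from Complex.ext rfl (by simp [h1])]
  rfl
end
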